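/- arXiv:2405.00761 — 2 statements merged into one kernel-verified Lean document; each statement's English description precedes it below -/
import Mathlib

section
/- With λ, a_k, A_k as in the harmonic lift setup (λ = ∂_z∂_z̄ log λ, a_k = −λ⁻¹∂_k∂_z̄ log λ, A_k = ∂_z̄ a_k), define the Laplace-type operator □ = −λ⁻¹∂_z∂_z̄ and the commutator operator ξ_k(f) = −λ⁻¹∂_z(A_k ∂_z f) on smooth functions f. Then (□+1)v_k − v_k(□+1) = □v_k − v_k□ = ξ_k as operators on smooth functions, where v_k = ∂_k + a_k∂_z, given the identity ∂_z a_k = −λ⁻¹(∂_z λ) a_k − λ⁻¹ ∂_k λ. -/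
/-! Expanding the derivatives, `□ v_k - v_k □ = ξ_k + (v_k(λ⁻¹) - λ⁻¹ ∂_z a_k) ∂_z ∂_z̄`.
Since `v_k(λ⁻¹) = -λ⁻² v_k(λ)`, the hypothesis on `∂_z a_k` says exactly that this coefficient
vanishes. The `+1` terms cancel because `v_k` is additive. -/

variable {A : Type*} [CommRing A] [Algebra ℂ A]

/-- The operator `□ = -λ⁻¹ ∂_z ∂_z̄` (with `linv = λ⁻¹`). -/
def boxOp (linv : A) (Dz Dzb : Derivation ℂ A A) (f : A) : A := -(linv * Dz (Dzb f))

/-- The harmonic lift `v_k = ∂_k + a_k ∂_z`. -/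
def vOp (ak : A) (Dk Dz : Derivation ℂ A A) (f : A) : A := Dk f + ak * Dz f

/-- The commutator operator `ξ_k(f) = -λ⁻¹ ∂_z(A_k ∂_z f)` with `A_k = ∂_z̄ a_k`. -/
def xiOp (linv ak : A) (Dz Dzb : Derivation ℂ A A) (f : A) : A :=
  -(linv * Dz (Dzb ak * Dz f))

theorem vOp_add (ak : A) (Dk Dz : Derivation ℂ A A) (f g : A) :
    vOp ak Dk Dz (f + g) = vOp ak Dk Dz f + vOp ak Dk Dz g := by
  simp only [vOp, map_add]
  ring

theorem vOp_eq_neg_sq_mul_of_mul_eq_one (ak : A) (Dk Dz : Derivation ℂ A A) {lam linv : A}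
    (hinv : lam * linv = 1) :
    vOp ak Dk Dz linv = -(linv ^ 2 * vOp ak Dk Dz lam) := by
  have hlinv : linv * lam = 1 := by rw [mul_comm, hinv]
  simp only [vOp, Dk.leibniz_of_mul_eq_one hlinv, Dz.leibniz_of_mul_eq_one hlinv, smul_eq_mul]
  ring

theorem boxOp_vOp_sub_vOp_boxOp (Dz Dzb Dk : Derivation ℂ A A)
    (h1 : ∀ f : A, Dz (Dzb f) = Dzb (Dz f))
    (h2 : ∀ f : A, Dk (Dz f) = Dz (Dk f))
    (h3 : ∀ f : A, Dk (Dzb f) = Dzb (Dk f))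
    (linv ak f : A) :
    boxOp linv Dz Dzb (vOp ak Dk Dz f) - vOp ak Dk Dz (boxOp linv Dz Dzb f)
      = xiOp linv ak Dz Dzb f + (vOp ak Dk Dz linv - linv * Dz ak) * Dz (Dzb f) := by
  simp only [boxOp, vOp, xiOp, map_add, map_neg, Derivation.leibniz, smul_eq_mul]
  rw [h2 (Dzb f), h3 f, h1 (Dk f), h1 f]
  ring

/-- `(□+1)v_k - v_k(□+1) = □v_k - v_k□ = ξ_k` as operators on smooth
functions, given the Kähler–Einstein identity `∂_z a_k = -λ⁻¹(∂_z λ)a_k - λ⁻¹ ∂_k λ`. -/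
theorem box_v_commutator
    (Dz Dzb Dk : Derivation ℂ A A)
    (h1 : ∀ f : A, Dz (Dzb f) = Dzb (Dz f))
    (h2 : ∀ f : A, Dk (Dz f) = Dz (Dk f))
    (h3 : ∀ f : A, Dk (Dzb f) = Dzb (Dk f))
    (lam linv ak : A) (hinv : lam * linv = 1)
    (hak : Dz ak = -(linv * Dz lam * ak) - linv * Dk lam) :
    ∀ f : A,
      (boxOp linv Dz Dzb (vOp ak Dk Dz f) + vOp ak Dk Dz f)
          - vOp ak Dk Dz (boxOp linv Dz Dzb f + f)
        = xiOp linv ak Dz Dzb f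
      ∧ boxOp linv Dz Dzb (vOp ak Dk Dz f) - vOp ak Dk Dz (boxOp linv Dz Dzb f)
        = xiOp linv ak Dz Dzb f := by
  have hcoeff : vOp ak Dk Dz linv - linv * Dz ak = 0 := by
    rw [vOp_eq_neg_sq_mul_of_mul_eq_one ak Dk Dz hinv, hak, vOp]
    ring
  intro f
  have hcomm := boxOp_vOp_sub_vOp_boxOp Dz Dzb Dk h1 h2 h3 linv ak f
  rw [hcoeff, zero_mul, add_zero] at hcomm
  refine ⟨?_, hcomm⟩
  rw [vOp_add]
  linear_combination hcomm
end

section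
/- Let A and B be positive definite n×n Hermitian matrices and α, β > 0 constants such that B ≥ αA (i.e., B − αA is positive semidefinite) and det(B) ≤ β·det(A). Then there exists a constant γ > 0 depending only on α, β, and n such that B ≤ γA. -/
open scoped ComplexOrder

/-!
Conjugating by `T = A^{-1/2}` reduces to the case `A = 1`: the eigenvalues of `C = T B T` are all
at least `α` and their product `det B / det A` is at most `β`, so each of them is at most
`β / α ^ (n - 1)`.
-/

theorem mul_pow_card_sub_one_le_of_prod_le {ι : Type*} [Fintype ι] {f : ι → ℝ} {a b : ℝ}
    (ha : 0 ≤ a) (haf : ∀ i, a ≤ f i) (hfb : ∏ i, f i ≤ b) (j : ι) :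
    f j * a ^ (Fintype.card ι - 1) ≤ b := by
  classical
  calc f j * a ^ (Fintype.card ι - 1)
      = f j * ∏ _i ∈ Finset.univ.erase j, a := by
        rw [Finset.prod_const, Finset.card_erase_of_mem (Finset.mem_univ j), Finset.card_univ]
    _ ≤ f j * ∏ i ∈ Finset.univ.erase j, f i := by
        gcongr with i
        · exact ha.trans (haf j)
        · exact haf i
    _ = ∏ i, f i := Finset.mul_prod_erase _ _ (Finset.mem_univ j)
    _ ≤ b := hfb

namespace Matrix

open scoped MatrixOrder

variable {ι 𝕜 : Type*} [Fintype ι] [DecidableEq ι] [RCLike 𝕜] {C : Matrix ι ι 𝕜}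

theorem IsHermitian.posSemidef_sub_smul_one_iff (hC : C.IsHermitian) (a : ℝ) :
    (C - a • 1).PosSemidef ↔ ∀ i, a ≤ hC.eigenvalues i := by
  rw [← Algebra.algebraMap_eq_smul_one, ← le_iff, algebraMap_le_iff_le_spectrum hC.isSelfAdjoint,
    hC.spectrum_real_eq_range_eigenvalues, Set.forall_mem_range]

theorem IsHermitian.posSemidef_smul_one_sub_iff (hC : C.IsHermitian) (a : ℝ) :
    (a • 1 - C).PosSemidef ↔ ∀ i, hC.eigenvalues i ≤ a := by
  rw [← Algebra.algebraMap_eq_smul_one, ← le_iff, le_algebraMap_iff_spectrum_le hC.isSelfAdjoint,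
    hC.spectrum_real_eq_range_eigenvalues, Set.forall_mem_range]

theorem IsHermitian.re_det_eq_prod_eigenvalues (hC : C.IsHermitian) :
    RCLike.re C.det = ∏ i, hC.eigenvalues i := by
  rw [hC.det_eq_prod_eigenvalues, ← RCLike.ofReal_prod, RCLike.ofReal_re]

theorem IsHermitian.posSemidef_smul_one_sub_of_re_det_le (hC : C.IsHermitian) {a b : ℝ}
    (ha : 0 < a) (hCa : (C - a • 1).PosSemidef) (hdet : RCLike.re C.det ≤ b) :
    ((b / a ^ (Fintype.card ι - 1)) • 1 - C).PosSemidef := by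
  rw [hC.posSemidef_sub_smul_one_iff] at hCa
  rw [hC.re_det_eq_prod_eigenvalues] at hdet
  rw [hC.posSemidef_smul_one_sub_iff]
  intro i
  rw [le_div_iff₀ (by positivity)]
  exact mul_pow_card_sub_one_le_of_prod_le ha.le hCa hdet i

theorem PosDef.exists_isUnit_star_mul_mul_eq_one {A : Matrix ι ι 𝕜} (hA : A.PosDef) :
    ∃ T : Matrix ι ι 𝕜, IsUnit T ∧ star T * A * T = 1 := by
  have hS : IsUnit (CFC.sqrt A).det :=
    (isUnit_iff_isUnit_det _).mp (isStrictlyPositive_iff_posDef.mpr hA).sqrt.isUnit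
  have hS_herm : (CFC.sqrt A).IsHermitian :=
    (nonneg_iff_posSemidef.mp (CFC.sqrt_nonneg A)).isHermitian
  have hSS : CFC.sqrt A * CFC.sqrt A = A := CFC.sqrt_mul_sqrt_self A hA.posSemidef.nonneg
  generalize CFC.sqrt A = S at hS hS_herm hSS
  subst hSS
  refine ⟨S⁻¹, isUnit_nonsing_inv_iff.mpr ((isUnit_iff_isUnit_det S).mpr hS), ?_⟩
  rw [star_eq_conjTranspose, hS_herm.inv.eq, ← mul_assoc, nonsing_inv_mul S hS, one_mul,
    mul_nonsing_inv S hS]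

theorem det_star_mul_mul_mul_det {R : Type*} [CommRing R] [StarRing R] {T A : Matrix ι ι R}
    (h : star T * A * T = 1) (B : Matrix ι ι R) :
    det (star T * B * T) * det A = det B := by
  have hdet := congrArg det h
  simp only [det_mul, det_one] at hdet ⊢
  linear_combination det B * hdet

end Matrix

/-- Let `A`, `B` be positive definite `n×n` Hermitian matrices with
`B ≥ αA` (i.e. `B - αA` positive semidefinite) and `det B ≤ β det A` (determinants
of positive definite matrices are real and positive).  Then there is a constant
`γ > 0` depending only on `α`, `β`, `n` with `B ≤ γA`. -/
theorem posdef_det_comparison (n : ℕ) (α β : ℝ) (hα : 0 < α) (hβ : 0 < β) :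
    ∃ γ : ℝ, 0 < γ ∧ ∀ A B : Matrix (Fin n) (Fin n) ℂ,
      A.PosDef → B.PosDef → (B - α • A).PosSemidef → B.det.re ≤ β * A.det.re →
      (γ • A - B).PosSemidef := by
  refine ⟨β / α ^ (n - 1), by positivity, fun A B hA hB hBA hdet => ?_⟩
  obtain ⟨T, hT, hTAT⟩ := hA.exists_isUnit_star_mul_mul_eq_one
  have hconj (c : ℝ) : star T * (c • A) * T = c • 1 := by
    rw [Matrix.mul_smul, Matrix.smul_mul, hTAT]
  set C := star T * B * T
  have hC : C.IsHermitian := (hB.posSemidef.conjTranspose_mul_mul_same T).isHermitian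
  have hCα : (C - α • 1).PosSemidef := by
    simpa only [← Matrix.star_eq_conjTranspose, Matrix.mul_sub, Matrix.sub_mul, hconj] using
      hBA.conjTranspose_mul_mul_same T
  have hCdet : C.det.re ≤ β := by
    obtain ⟨hre, him⟩ := Complex.pos_iff.mp hA.det_pos
    rw [← Matrix.det_star_mul_mul_mul_det hTAT B, Complex.mul_re, ← him, mul_zero,
      sub_zero] at hdet
    exact le_of_mul_le_mul_right hdet hre
  rw [← Matrix.IsUnit.posSemidef_star_left_conjugate_iff hT, Matrix.mul_sub, Matrix.sub_mul, hconj]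
  simpa only [Fintype.card_fin] using hC.posSemidef_smul_one_sub_of_re_det_le hα hCα hCdet
end
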